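/- No two edges of F_N cross: for every natural number N ≥ 1, there do not exist rational vertices a/b, c/d, e/f, g/h ∈ X_N (all in lowest terms, with positive denominators) satisfying a/b < e/f < c/d < g/h such that a/b is adjacent to c/d in F_N and e/f is adjacent to g/h in F_N. -/

import Mathlib

/-- Membership in the vertex set `X_N`: a pair `(p, q)` of integers represents the
reduced fraction `p/q` with `q ≥ 0`, `gcd(p, q) = 1` and `N ∣ q`; the pair `(1, 0)`
represents `∞ = 1/0`. -/
def memX (N : ℕ) (v : ℤ × ℤ) : Prop :=
  0 ≤ v.2 ∧ IsCoprime v.1 v.2 ∧ (N : ℤ) ∣ v.2 ∧ (v.2 = 0 → v.1 = 1)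

/-- The vertex set `X_N` of the graph `F_N`. -/
def X (N : ℕ) : Type := {v : ℤ × ℤ // memX N v}

/-- The vertex `∞ = 1/0`. -/
def infty (N : ℕ) : X N :=
  ⟨(1, 0), ⟨le_refl 0, isCoprime_one_left, dvd_zero _, fun _ => rfl⟩⟩

/-- The value of a vertex as a rational number (`∞` is sent to junk). -/
def fval {N : ℕ} (v : X N) : ℚ := (v.1.1 : ℚ) / (v.1.2 : ℚ)

/-- The graph `F_N`: two vertices `p/q` and `r/s` (in lowest terms, with `∞ = 1/0`)
are adjacent if and only if `r*q - s*p = ±N`. -/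
def FareyGraph (N : ℕ) : SimpleGraph (X N) where
  Adj v w := v ≠ w ∧ (w.1.1 * v.1.2 - w.1.2 * v.1.1 = (N : ℤ) ∨
      w.1.1 * v.1.2 - w.1.2 * v.1.1 = -(N : ℤ))
  symm := by
    refine ⟨?_⟩
    rintro v w ⟨hne, h | h⟩
    · exact ⟨hne.symm, Or.inr (by linear_combination -h)⟩
    · exact ⟨hne.symm, Or.inl (by linear_combination -h)⟩
  loopless := by refine ⟨?_⟩; rintro v ⟨hne, -⟩; exact hne rfl

/-!
For vertices `u = p/q` of `X_N` write `cross u v = rq - sp` for `v = r/s`. When `u < v` are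
rational, `cross u v` is positive and divisible by `N`, hence at least `N`; along an edge it
equals `N`. For crossing edges `v₁v₃` and `v₂v₄` with `v₁ < v₂ < v₃ < v₄` the Plücker relation
`[13][24] = [12][34] + [14][23]` then gives `N² ≥ 2N²`, which is absurd.
-/

namespace FareyGraph

def cross (u v : ℤ × ℤ) : ℤ := v.1 * u.2 - v.2 * u.1

theorem cross_mul_cross (u v w x : ℤ × ℤ) :
    cross u w * cross v x = cross u v * cross w x + cross u x * cross v w := by
  simp only [cross]; ring

theorem div_lt_div_iff_cross_pos {u v : ℤ × ℤ} (hu : 0 < u.2) (hv : 0 < v.2) :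
    (u.1 / u.2 : ℚ) < v.1 / v.2 ↔ 0 < cross u v := by
  rw [div_lt_div_iff₀ (by exact_mod_cast hu) (by exact_mod_cast hv), cross, sub_pos]
  norm_cast
  rw [mul_comm u.1, mul_comm v.1]

theorem dvd_cross {n : ℤ} {u v : ℤ × ℤ} (hu : n ∣ u.2) (hv : n ∣ v.2) : n ∣ cross u v :=
  dvd_sub (hu.mul_left _) (hv.mul_right _)

variable {N : ℕ} {v w : X N}

theorem cross_pos_of_fval_lt (hv : 0 < v.1.2) (hw : 0 < w.1.2) (hvw : fval v < fval w) :
    0 < cross v.1 w.1 :=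
  (div_lt_div_iff_cross_pos hv hw).1 hvw

theorem le_cross_of_fval_lt (hv : 0 < v.1.2) (hw : 0 < w.1.2) (hvw : fval v < fval w) :
    (N : ℤ) ≤ cross v.1 w.1 :=
  Int.le_of_dvd (cross_pos_of_fval_lt hv hw hvw) (dvd_cross v.2.2.2.1 w.2.2.2.1)

theorem cross_eq_of_adj (hadj : (FareyGraph N).Adj v w) (hv : 0 < v.1.2) (hw : 0 < w.1.2)
    (hvw : fval v < fval w) : cross v.1 w.1 = N := by
  have hpos := cross_pos_of_fval_lt hv hw hvw
  rcases hadj.2 with h | h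
  · exact h
  · change cross v.1 w.1 = -N at h
    omega

end FareyGraph

open FareyGraph

theorem stmt1_general (N : ℕ) (v₁ v₂ v₃ v₄ : X N)
    (h₁ : 0 < v₁.1.2) (h₂ : 0 < v₂.1.2) (h₃ : 0 < v₃.1.2) (h₄ : 0 < v₄.1.2)
    (h12 : fval v₁ < fval v₂) (h23 : fval v₂ < fval v₃) (h34 : fval v₃ < fval v₄)
    (e13 : (FareyGraph N).Adj v₁ v₃) (e24 : (FareyGraph N).Adj v₂ v₄) : False := by
  have h13 := cross_eq_of_adj e13 h₁ h₃ (h12.trans h23)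
  have h24 := cross_eq_of_adj e24 h₂ h₄ (h23.trans h34)
  have hN : (0 : ℤ) < N := h13 ▸ cross_pos_of_fval_lt h₁ h₃ (h12.trans h23)
  have h12' := le_cross_of_fval_lt h₁ h₂ h12
  have h23' := le_cross_of_fval_lt h₂ h₃ h23
  have h34' := le_cross_of_fval_lt h₃ h₄ h34
  have h14' := le_cross_of_fval_lt h₁ h₄ (h12.trans (h23.trans h34))
  have hsum : (N : ℤ) * N + N * N ≤ N * N :=
    calc (N : ℤ) * N + N * N
        ≤ cross v₁.1 v₂.1 * cross v₃.1 v₄.1 + cross v₁.1 v₄.1 * cross v₂.1 v₃.1 :=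
          add_le_add (mul_le_mul h12' h34' hN.le (hN.trans_le h12').le)
            (mul_le_mul h14' h23' hN.le (hN.trans_le h14').le)
      _ = cross v₁.1 v₃.1 * cross v₂.1 v₄.1 := (cross_mul_cross _ _ _ _).symm
      _ = N * N := by rw [h13, h24]
  linarith [mul_pos hN hN]

/-- No two edges of `F_N` cross: there are no rational vertices
`a/b < e/f < c/d < g/h` in `X_N` with `a/b ~ c/d` and `e/f ~ g/h` in `F_N`. -/
theorem stmt1 (N : ℕ) (hN : 1 ≤ N) (v₁ v₂ v₃ v₄ : X N)
    (h₁ : 0 < v₁.1.2) (h₂ : 0 < v₂.1.2) (h₃ : 0 < v₃.1.2) (h₄ : 0 < v₄.1.2)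
    (h12 : fval v₁ < fval v₂) (h23 : fval v₂ < fval v₃) (h34 : fval v₃ < fval v₄)
    (e13 : (FareyGraph N).Adj v₁ v₃) (e24 : (FareyGraph N).Adj v₂ v₄) : False :=
  stmt1_general N v₁ v₂ v₃ v₄ h₁ h₂ h₃ h₄ h12 h23 h34 e13 e24
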